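/- For every positive integer i, ∑_{k=1}^{i+2} b(i,2,k)·(2m+1−2^k)/k! = (2m+1)/2 − (i+4)/2 for any integer m, where b(i,2,k) is defined via sums over compositions. -/
import Mathlib


open Finset Polynomial

/-- The set of `k`-tuples of positive integers summing to `n`. -/
def P (k n : ℕ) : Finset (Fin k → ℕ) :=
  (Finset.Nat.antidiagonalTuple k n).filter fun l => ∀ i, 0 < l i

/-- `∑_{(l₁,…,l_k)∈P(k,n)} 1/(l₁⋯l_k)`. -/
def S (k n : ℕ) : ℚ := ∑ l ∈ P k n, (∏ i, (l i : ℚ))⁻¹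

/-- `e_l(1,2,…,m)` : the l-th elementary symmetric polynomial evaluated at 1,…,m. -/
def esym (m l : ℕ) : ℚ := (((Finset.range m).val.map fun i => ((i : ℚ) + 1)).esymm l)

lemma mem_P {k n : ℕ} {l : Fin k → ℕ} : l ∈ P k n ↔ (∑ i, l i) = n ∧ ∀ i, 0 < l i := by
  simp [P, Finset.Nat.mem_antidiagonalTuple]

lemma S_eq_zero {k n : ℕ} (h : n < k) : S k n = 0 := by
  have hP : P k n = ∅ := by
    ext l
    simp only [mem_P, Finset.notMem_empty, iff_false, not_and]
    intro hs hp
    have hk : k ≤ ∑ i, l i := by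
      calc k = ∑ _i : Fin k, 1 := by simp
        _ ≤ ∑ i, l i := Finset.sum_le_sum fun i _ => hp i
    omega
  rw [S, hP, Finset.sum_empty]

lemma S_zero_zero : S 0 0 = 1 := by
  have h1 : (fun (_ : Fin 0) => 0) ∈ P 0 0 := by
    refine mem_P.mpr ⟨by simp, fun i => i.elim0⟩
  have hP : P 0 0 = {fun _ => 0} := by
    refine Finset.eq_singleton_iff_unique_mem.mpr ⟨h1, fun x _ => funext fun i => i.elim0⟩
  rw [S, hP, Finset.sum_singleton]
  simp

lemma S_zero_pos {n : ℕ} (h : 0 < n) : S 0 n = 0 := by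
  have hP : P 0 n = ∅ := by
    ext l
    simp only [mem_P, Finset.notMem_empty, iff_false, not_and]
    intro hs
    simp at hs
    omega
  rw [S, hP, Finset.sum_empty]

lemma S_rec (k n : ℕ) :
    (n : ℚ) * S (k + 1) n = (k + 1) * ∑ j ∈ Finset.range n, S k j := by
  have key : ∀ i : Fin (k + 1),
      (∑ l ∈ P (k + 1) n, (∏ j : Fin k, ((l (i.succAbove j) : ℚ)))⁻¹)
        = ∑ j ∈ Finset.range n, S k j := by
    intro i
    have hr : ∑ j ∈ Finset.range n, S k j
        = ∑ x ∈ (Finset.range n).sigma (fun j => P k j), (∏ t, ((x.2 t : ℚ)))⁻¹ := by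
      rw [Finset.sum_sigma]
      rfl
    rw [hr]
    apply Finset.sum_nbij'
      (i := fun l => (⟨∑ j : Fin k, l (i.succAbove j), fun j => l (i.succAbove j)⟩ :
        Σ _ : ℕ, (Fin k → ℕ)))
      (j := fun x => i.insertNth (n - x.1) x.2)
    · intro l hl
      obtain ⟨hs, hp⟩ := mem_P.mp hl
      rw [Fin.sum_univ_succAbove l i] at hs
      simp only [Finset.mem_sigma, Finset.mem_range]
      refine ⟨by have := hp i; omega, mem_P.mpr ⟨rfl, fun j => hp _⟩⟩
    · intro x hx
      simp only [Finset.mem_sigma, Finset.mem_range] at hx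
      obtain ⟨hx1, hx2⟩ := hx
      obtain ⟨hs, hp⟩ := mem_P.mp hx2
      refine mem_P.mpr ⟨?_, ?_⟩
      · rw [Fin.sum_univ_succAbove _ i, Fin.insertNth_apply_same]
        have : ∑ j : Fin k, Fin.insertNth (α := fun _ => ℕ) i (n - x.1) x.2 (i.succAbove j) = x.1 := by
          rw [← hs]
          exact Finset.sum_congr rfl fun j _ => by simp
        omega
      · intro j
        by_cases hj : j = i
        · subst hj
          rw [Fin.insertNth_apply_same]
          omega
        · obtain ⟨t, rfl⟩ := Fin.exists_succAbove_eq (Ne.symm (fun h => hj h.symm))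
          simpa using hp t
    · intro l hl
      obtain ⟨hs, hp⟩ := mem_P.mp hl
      rw [Fin.sum_univ_succAbove l i] at hs
      have hli : n - ∑ j : Fin k, l (i.succAbove j) = l i := by omega
      simp only [hli]
      exact Fin.insertNth_self_removeNth i l
    · intro x hx
      simp only [Finset.mem_sigma, Finset.mem_range] at hx
      obtain ⟨hx1, hx2⟩ := hx
      obtain ⟨hs, hp⟩ := mem_P.mp hx2
      obtain ⟨a, t⟩ := x
      simp only at hs hp ⊢
      congr 1
      · rw [← hs]
        exact Finset.sum_congr rfl fun j _ => by simp
      · funext j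
        simp
    · intro l hl
      rfl
  calc (n : ℚ) * S (k + 1) n
      = ∑ l ∈ P (k + 1) n, ∑ i : Fin (k + 1),
          (∏ j : Fin k, ((l (i.succAbove j) : ℚ)))⁻¹ := by
        rw [S, Finset.mul_sum]
        refine Finset.sum_congr rfl fun l hl => ?_
        obtain ⟨hs, hp⟩ := mem_P.mp hl
        have hn : (n : ℚ) = ∑ i : Fin (k + 1), (l i : ℚ) := by
          rw [← hs]; push_cast; rfl
        rw [hn, Finset.sum_mul]
        refine Finset.sum_congr rfl fun i _ => ?_
        rw [Fin.prod_univ_succAbove (fun j => (l j : ℚ)) i]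
        have h0 : (l i : ℚ) ≠ 0 := Nat.cast_ne_zero.mpr (hp i).ne'
        have h0' : (∏ j : Fin k, (l (i.succAbove j) : ℚ)) ≠ 0 :=
          Finset.prod_ne_zero_iff.mpr fun j _ => Nat.cast_ne_zero.mpr (hp _).ne'
        field_simp
    _ = ∑ i : Fin (k + 1), ∑ l ∈ P (k + 1) n,
          (∏ j : Fin k, ((l (i.succAbove j) : ℚ)))⁻¹ := Finset.sum_comm
    _ = ∑ _i : Fin (k + 1), ∑ j ∈ Finset.range n, S k j :=
        Finset.sum_congr rfl fun i _ => key i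
    _ = (k + 1) * ∑ j ∈ Finset.range n, S k j := by
        rw [Finset.sum_const, Finset.card_univ, Fintype.card_fin, nsmul_eq_mul]
        push_cast
        ring

/-- `∑_{k=1}^n S(k,n) t^k / k!`. -/
def Tq (t : ℚ) (n : ℕ) : ℚ := ∑ k ∈ Finset.Icc 1 n, S k n * t ^ k / (Nat.factorial k)

lemma sum_Icc_eq_range (f : ℕ → ℚ) (n : ℕ) :
    ∑ k ∈ Finset.Icc 1 n, f k = ∑ k ∈ Finset.range n, f (k + 1) := by
  induction n with
  | zero => simp
  | succ n ih =>
    rw [Finset.sum_Icc_succ_top (by omega), ih, Finset.sum_range_succ]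

lemma Tq_rec (t : ℚ) (n : ℕ) (hn : 1 ≤ n) :
    (n : ℚ) * Tq t n = t * (1 + ∑ j ∈ Finset.Ico 1 n, Tq t j) := by
  have h1 : (n : ℚ) * Tq t n
      = ∑ k ∈ Finset.range n, (t ^ (k + 1) / ((k + 1).factorial : ℚ)) * ((n : ℚ) * S (k + 1) n) := by
    rw [Tq, sum_Icc_eq_range (fun k => S k n * t ^ k / (Nat.factorial k)) n, Finset.mul_sum]
    exact Finset.sum_congr rfl fun k _ => by ring
  have h2 : ∀ k : ℕ, (t ^ (k + 1) / ((k + 1).factorial : ℚ)) * ((n : ℚ) * S (k + 1) n)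
      = t * ((t ^ k / (k.factorial : ℚ)) * ∑ j ∈ Finset.range n, S k j) := by
    intro k
    rw [S_rec]
    have hf : ((k + 1).factorial : ℚ) = (k + 1) * (k.factorial : ℚ) := by
      rw [Nat.factorial_succ]; push_cast; ring
    have hk0 : ((k : ℚ) + 1) ≠ 0 := by positivity
    have hfk : (k.factorial : ℚ) ≠ 0 := Nat.cast_ne_zero.mpr k.factorial_ne_zero
    rw [hf]
    field_simp
    ring
  rw [h1, Finset.sum_congr rfl fun k _ => h2 k, ← Finset.mul_sum]
  congr 1
  have hswap : ∑ k ∈ Finset.range n, ((t ^ k / (k.factorial : ℚ)) * ∑ j ∈ Finset.range n, S k j)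
      = ∑ j ∈ Finset.range n, ∑ k ∈ Finset.range n, S k j * t ^ k / (k.factorial : ℚ) := by
    rw [Finset.sum_comm (s := Finset.range n) (t := Finset.range n)
      (f := fun j k => S k j * t ^ k / (k.factorial : ℚ))]
    refine Finset.sum_congr rfl fun k _ => ?_
    rw [Finset.mul_sum]
    exact Finset.sum_congr rfl fun j _ => by ring
  rw [hswap]
  have hsplit : Finset.range n = insert 0 (Finset.Ico 1 n) := by
    ext x; simp [Finset.mem_range, Finset.mem_Ico]; omega
  rw [hsplit, Finset.sum_insert (by simp)]
  congr 1
  · -- inner sum at j = 0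
    rw [← hsplit]
    rw [Finset.sum_eq_single 0]
    · simp [S_zero_zero]
    · intro k _ hk
      rw [S_eq_zero (by omega)]
      ring
    · intro h
      exact absurd (Finset.mem_range.mpr (by omega)) h
  · -- inner sums at j ≥ 1
    refine Finset.sum_congr rfl fun j hj => ?_
    obtain ⟨hj1, hj2⟩ := Finset.mem_Ico.mp hj
    rw [← hsplit, Tq]
    symm
    apply Finset.sum_subset
    · intro k hk
      rw [Finset.mem_Icc] at hk
      exact Finset.mem_range.mpr (by omega)
    · intro k hk hk'
      rw [Finset.mem_range] at hk
      rw [Finset.mem_Icc] at hk'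
      rcases Nat.eq_zero_or_pos k with h0 | h0
      · subst h0
        rw [S_zero_pos hj1]
        ring
      · rw [S_eq_zero (by omega)]
        ring

lemma Tq_one : ∀ n : ℕ, 1 ≤ n → Tq 1 n = 1 := by
  intro n
  induction n using Nat.strong_induction_on with
  | _ n ih =>
    intro hn
    have h := Tq_rec 1 n hn
    have hsum : ∑ j ∈ Finset.Ico 1 n, Tq 1 j = (n : ℚ) - 1 := by
      rw [Finset.sum_congr rfl fun j hj =>
        ih j (Finset.mem_Ico.mp hj).2 (Finset.mem_Ico.mp hj).1]
      rw [Finset.sum_const, Nat.card_Ico, nsmul_eq_mul, mul_one]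
      push_cast [Nat.cast_sub hn]
      ring
    rw [hsum] at h
    have hn0 : (n : ℚ) ≠ 0 := Nat.cast_ne_zero.mpr (by omega)
    have h' : (n : ℚ) * Tq 1 n = (n : ℚ) * 1 := by rw [h]; ring
    exact mul_left_cancel₀ hn0 h'

lemma gauss (n : ℕ) (hn : 1 ≤ n) :
    ∑ j ∈ Finset.Ico 1 n, ((j : ℚ) + 1) = (n : ℚ) * (n + 1) / 2 - 1 := by
  induction n, hn using Nat.le_induction with
  | base => norm_num
  | succ n hn ih =>
    rw [Finset.sum_Ico_succ_top hn, ih]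
    push_cast
    ring

lemma Tq_two : ∀ n : ℕ, 1 ≤ n → Tq 2 n = (n : ℚ) + 1 := by
  intro n
  induction n using Nat.strong_induction_on with
  | _ n ih =>
    intro hn
    have h := Tq_rec 2 n hn
    have hsum : ∑ j ∈ Finset.Ico 1 n, Tq 2 j = (n : ℚ) * (n + 1) / 2 - 1 := by
      rw [Finset.sum_congr rfl fun j hj =>
        ih j (Finset.mem_Ico.mp hj).2 (Finset.mem_Ico.mp hj).1]
      exact gauss n hn
    rw [hsum] at h
    have hn0 : (n : ℚ) ≠ 0 := Nat.cast_ne_zero.mpr (by omega)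
    have h' : (n : ℚ) * Tq 2 n = (n : ℚ) * ((n : ℚ) + 1) := by rw [h]; ring
    exact mul_left_cancel₀ hn0 h'

theorem stmt14 (i : ℕ) (hi : 0 < i) (m : ℤ) :
    ∑ k ∈ Finset.Icc 1 (i + 2),
        (S k (i + 2) - S k (i + 1) / 2) * (2 * (m : ℚ) + 1 - 2 ^ k) / k.factorial
      = (2 * (m : ℚ) + 1) / 2 - ((i : ℚ) + 4) / 2 := by
  have ext1 : ∀ t : ℚ, ∑ k ∈ Finset.Icc 1 (i + 2), S k (i + 1) * t ^ k / (k.factorial : ℚ)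
      = Tq t (i + 1) := by
    intro t
    rw [Finset.sum_Icc_succ_top (by omega : 1 ≤ i + 2), S_eq_zero (by omega : i + 1 < i + 2)]
    simp [Tq]
  have e1 : ∑ k ∈ Finset.Icc 1 (i + 2), S k (i + 2) * (1 : ℚ) ^ k / (k.factorial : ℚ) = 1 :=
    Tq_one (i + 2) (by omega)
  have e2 : ∑ k ∈ Finset.Icc 1 (i + 2), S k (i + 2) * (2 : ℚ) ^ k / (k.factorial : ℚ)
      = (i : ℚ) + 2 + 1 := by
    have := Tq_two (i + 2) (by omega)
    rw [Tq] at this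
    rw [this]
    push_cast
    ring
  have e3 : ∑ k ∈ Finset.Icc 1 (i + 2), S k (i + 1) * (1 : ℚ) ^ k / (k.factorial : ℚ) = 1 := by
    rw [ext1 1]
    exact Tq_one (i + 1) (by omega)
  have e4 : ∑ k ∈ Finset.Icc 1 (i + 2), S k (i + 1) * (2 : ℚ) ^ k / (k.factorial : ℚ)
      = (i : ℚ) + 1 + 1 := by
    rw [ext1 2]
    have := Tq_two (i + 1) (by omega)
    rw [this]
    push_cast
    ring
  calc ∑ k ∈ Finset.Icc 1 (i + 2),
        (S k (i + 2) - S k (i + 1) / 2) * (2 * (m : ℚ) + 1 - 2 ^ k) / k.factorial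
      = ∑ k ∈ Finset.Icc 1 (i + 2),
          ((2 * (m : ℚ) + 1) * (S k (i + 2) * (1 : ℚ) ^ k / (k.factorial : ℚ))
            - (S k (i + 2) * (2 : ℚ) ^ k / (k.factorial : ℚ))
            - (2 * (m : ℚ) + 1) / 2 * (S k (i + 1) * (1 : ℚ) ^ k / (k.factorial : ℚ))
            + (S k (i + 1) * (2 : ℚ) ^ k / (k.factorial : ℚ)) / 2) := by
        refine Finset.sum_congr rfl fun k _ => ?_
        have hfk : (k.factorial : ℚ) ≠ 0 := Nat.cast_ne_zero.mpr k.factorial_ne_zero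
        field_simp
        ring
    _ = (2 * (m : ℚ) + 1) / 2 - ((i : ℚ) + 4) / 2 := by
        rw [Finset.sum_add_distrib, Finset.sum_sub_distrib, Finset.sum_sub_distrib,
          ← Finset.mul_sum, ← Finset.mul_sum, ← Finset.sum_div, e1, e2, e3, e4]
        ring
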